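/- arXiv:1805.03419 — 2 statements merged into one kernel-verified Lean document; each statement's English description precedes it below -/
import Mathlib

section
/- Let S be a finite nonempty set and for each θ in (0,1)^N let P_θ be a probability measure on S such that θ ↦ P_θ(x) is continuous for every x ∈ S. Suppose for some θ₁ ∈ (0,1)^N and some x̄ ∈ S we have P_{θ₁}(x̄) > 0. Then there exists a neighborhood of θ₁ such that for every θ₂ in that neighborhood there exists a probability measure μ on S × S whose first marginal is P_{θ₁}, whose second marginal is P_{θ₂}, and which is supported on the set {(x,y) : x = y or x = x̄ or y = x̄}. -/
open Finset

lemma aux_min_max (p q : ℝ) : min p q + max 0 (p - q) = p := by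
  rcases le_total p q with h | h
  · rw [min_eq_left h, max_eq_left (by linarith)]; ring
  · rw [min_eq_right h, max_eq_right (by linarith)]; ring

/-- Lemma 2.1: maximal-type coupling with a distinguished configuration `xbar`. -/
theorem stmt_0 {S : Type*} [Fintype S] [DecidableEq S] [Nonempty S] (N : ℕ)
    (P : (Fin N → ℝ) → S → ℝ)
    (hP0 : ∀ θ, (∀ i, θ i ∈ Set.Ioo (0:ℝ) 1) → ∀ x, 0 ≤ P θ x)
    (hP1 : ∀ θ, (∀ i, θ i ∈ Set.Ioo (0:ℝ) 1) → ∑ x, P θ x = 1)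
    (hcont : ∀ x : S, ContinuousOn (fun θ => P θ x) {θ | ∀ i, θ i ∈ Set.Ioo (0:ℝ) 1})
    (θ₁ : Fin N → ℝ) (hθ₁ : ∀ i, θ₁ i ∈ Set.Ioo (0:ℝ) 1)
    (xbar : S) (hxbar : 0 < P θ₁ xbar) :
    ∃ U ∈ nhds θ₁, ∀ θ₂ ∈ U, (∀ i, θ₂ i ∈ Set.Ioo (0:ℝ) 1) →
      ∃ μ : S × S → ℝ,
        (∀ z, 0 ≤ μ z) ∧ (∑ z, μ z = 1) ∧
        (∀ x, ∑ y, μ (x, y) = P θ₁ x) ∧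
        (∀ y, ∑ x, μ (x, y) = P θ₂ y) ∧
        (∀ z, μ z ≠ 0 → z.1 = z.2 ∨ z.1 = xbar ∨ z.2 = xbar) := by
  classical
  set O : Set (Fin N → ℝ) := {θ | ∀ i, θ i ∈ Set.Ioo (0:ℝ) 1} with hO
  have hOopen : IsOpen O := by
    have : O = Set.pi Set.univ (fun _ : Fin N => Set.Ioo (0:ℝ) 1) := by
      ext θ; simp [O, Set.mem_pi]
    rw [this]
    exact isOpen_set_pi Set.finite_univ (fun i _ => isOpen_Ioo)
  set f : (Fin N → ℝ) → ℝ := fun θ => ∑ y ∈ Finset.univ.erase xbar, max 0 (P θ y - P θ₁ y)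
    with hf
  have hfcont : ContinuousOn f O := by
    apply continuousOn_finset_sum
    intro y _
    exact (continuous_const.max continuous_id).comp_continuousOn
      ((hcont y).sub continuousOn_const)
  have hfθ₁ : f θ₁ = 0 := by simp [hf]
  have hfat : ContinuousAt f θ₁ := hfcont.continuousAt (hOopen.mem_nhds hθ₁)
  refine ⟨O ∩ f ⁻¹' Set.Iio (P θ₁ xbar), Filter.inter_mem (hOopen.mem_nhds hθ₁)
    (hfat (Iio_mem_nhds (by rw [hfθ₁]; exact hxbar))), ?_⟩
  intro θ₂ hθ₂U hθ₂
  obtain ⟨hθ₂O, hθ₂f⟩ := hθ₂U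
  have hθ₂f' : f θ₂ < P θ₁ xbar := hθ₂f
  set m : S → ℝ := fun y => min (P θ₁ y) (P θ₂ y) with hm
  set a : S → ℝ := fun y => max 0 (P θ₁ y - P θ₂ y) with ha
  set b : S → ℝ := fun y => max 0 (P θ₂ y - P θ₁ y) with hb
  set c : ℝ := -∑ y, b y with hc
  have hma : ∀ y, m y + a y = P θ₁ y := fun y => aux_min_max _ _
  have hmb : ∀ y, m y + b y = P θ₂ y := by
    intro y
    have : m y = min (P θ₂ y) (P θ₁ y) := min_comm _ _
    rw [this]
    exact aux_min_max _ _
  have hab : ∀ y, a y - b y = P θ₁ y - P θ₂ y := by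
    intro y; have := hma y; have := hmb y; linarith
  have hsumab : ∑ y, a y = ∑ y, b y := by
    have h1 : ∑ y, (a y - b y) = 0 := by
      have h2 : ∑ y, (a y - b y) = ∑ y, (P θ₁ y - P θ₂ y) :=
        Finset.sum_congr rfl (fun y _ => hab y)
      rw [h2, Finset.sum_sub_distrib, hP1 θ₁ hθ₁, hP1 θ₂ hθ₂]; ring
    rw [Finset.sum_sub_distrib] at h1
    linarith
  have hm0 : ∀ y, 0 ≤ m y := fun y => le_min (hP0 θ₁ hθ₁ y) (hP0 θ₂ hθ₂ y)
  have ha0 : ∀ y, 0 ≤ a y := fun y => le_max_left _ _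
  have hb0 : ∀ y, 0 ≤ b y := fun y => le_max_left _ _
  have hsumb : ∑ y, b y = f θ₂ + b xbar := by
    rw [hf, ← Finset.sum_erase_add _ _ (Finset.mem_univ xbar)]
  have hD : 0 ≤ m xbar + a xbar + b xbar + c := by
    have := hma xbar
    rw [hc, hsumb]
    linarith
  set g : S → S → ℝ := fun x y =>
    (if x = y then m x else 0) + (if y = xbar then a x else 0) +
    (if x = xbar then b y else 0) + (if x = xbar ∧ y = xbar then c else 0) with hg
  have s1 : ∀ x : S, ∑ y, (if x = y then m x else 0) = m x := by
    intro x; rw [Finset.sum_ite_eq]; simp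
  have s2 : ∀ x : S, ∑ y : S, (if y = xbar then a x else 0) = a x := by
    intro x; rw [Finset.sum_ite_eq']; simp
  have s3 : ∀ x : S, ∑ y : S, (if x = xbar then b y else 0)
      = if x = xbar then ∑ y, b y else 0 := by
    intro x; split <;> simp
  have s4 : ∀ x : S, ∑ y : S, (if x = xbar ∧ y = xbar then c else 0)
      = if x = xbar then c else 0 := by
    intro x
    by_cases hx : x = xbar
    · simp [hx, Finset.sum_ite_eq']
    · simp [hx]
  have t1 : ∀ y : S, ∑ x, (if x = y then m x else 0) = m y := by
    intro y; rw [Finset.sum_ite_eq']; simp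
  have t2 : ∀ y : S, ∑ x : S, (if y = xbar then a x else 0)
      = if y = xbar then ∑ x, a x else 0 := by
    intro y; split <;> simp
  have t3 : ∀ y : S, ∑ x : S, (if x = xbar then b y else 0) = b y := by
    intro y; rw [Finset.sum_ite_eq']; simp
  have t4 : ∀ y : S, ∑ x : S, (if x = xbar ∧ y = xbar then c else 0)
      = if y = xbar then c else 0 := by
    intro y
    by_cases hy : y = xbar
    · simp [hy, Finset.sum_ite_eq']
    · simp [hy]
  have hrow : ∀ x, ∑ y, g x y = P θ₁ x := by
    intro x
    rw [hg]
    simp only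
    rw [Finset.sum_add_distrib, Finset.sum_add_distrib, Finset.sum_add_distrib,
      s1 x, s2 x, s3 x, s4 x]
    by_cases hx : x = xbar
    · subst hx
      rw [if_pos rfl, if_pos rfl, hc]
      have := hma x
      linarith
    · rw [if_neg hx, if_neg hx]
      have := hma x
      linarith
  have hcol : ∀ y, ∑ x, g x y = P θ₂ y := by
    intro y
    rw [hg]
    simp only
    rw [Finset.sum_add_distrib, Finset.sum_add_distrib, Finset.sum_add_distrib,
      t1 y, t2 y, t3 y, t4 y]
    by_cases hy : y = xbar
    · subst hy
      rw [if_pos rfl, if_pos rfl, hc, hsumab]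
      have := hmb y
      linarith
    · rw [if_neg hy, if_neg hy]
      have := hmb y
      linarith
  refine ⟨fun z => g z.1 z.2, ?_, ?_, hrow, hcol, ?_⟩
  · rintro ⟨x, y⟩
    show 0 ≤ g x y
    rw [hg]
    simp only
    by_cases hx : x = xbar
    · by_cases hy : y = xbar
      · have hxy : x = y := by rw [hx, hy]
        rw [if_pos hxy, if_pos hy, if_pos hx, if_pos ⟨hx, hy⟩]
        rw [hx] at *
        rw [hy] at *
        exact hD
      · have hxy : ¬ x = y := by rw [hx]; exact fun h => hy h.symm
        rw [if_pos hx, if_neg hxy, if_neg hy, if_neg (by tauto)]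
        have := hb0 y
        linarith
    · by_cases hy : y = xbar
      · have hxy : ¬ x = y := by rw [hy]; exact hx
        rw [if_neg hx, if_pos hy, if_neg hxy, if_neg (by tauto)]
        have := ha0 x
        linarith
      · by_cases hxy : x = y
        · rw [if_pos hxy, if_neg hy, if_neg hx, if_neg (by tauto)]
          have := hm0 x
          linarith
        · rw [if_neg hxy, if_neg hy, if_neg hx, if_neg (by tauto)]
          linarith
  · rw [Fintype.sum_prod_type]
    calc ∑ x, ∑ y, g x y = ∑ x, P θ₁ x := Finset.sum_congr rfl (fun x _ => hrow x)
    _ = 1 := hP1 θ₁ hθ₁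
  · rintro ⟨x, y⟩ hz
    by_contra h
    push_neg at h
    obtain ⟨h1, h2, h3⟩ := h
    apply hz
    show g x y = 0
    rw [hg]
    simp [h1, h2, h3]
end

section
/- Let S be a finite set with a nontrivial partition S = Ŝ ∪ S̋ (both parts nonempty, disjoint), and for each θ ∈ (0,1)^N let P_θ be a probability measure on S depending continuously on θ. Suppose for some θ₁ there exist x̂ ∈ Ŝ and x̋ ∈ S̋ with P_{θ₁}(x̂) > 0 and P_{θ₁}(x̋) > 0. Then for all θ₂ sufficiently close to θ₁ there exists a coupling μ of P_{θ₁} (first marginal) and P_{θ₂} (second marginal) supported on the set {(x,y) : x = y} ∪ {(x,y) : x = x̂} ∪ {(x,y) : x ∈ Ŝ ∪ {x̋} and y = x̂} ∪ {(x,y) : y = x̋}. In particular, under μ, conditionally on the first coordinate equaling x̋, the second coordinate equals x̂ or x̋ almost surely. -/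
open Finset

lemma sum_split_pair {S : Type*} [Fintype S] [DecidableEq S] (u v : S) (h : u ≠ v)
    (f : S → ℝ) : ∑ y, f y = f u + f v + ∑ y ∈ univ \ {u, v}, f y := by
  rw [← Finset.sum_sdiff (Finset.subset_univ ({u, v} : Finset S)), Finset.sum_pair h]
  ring

lemma core_coupling {S : Type*} [Fintype S] [DecidableEq S]
    (P Q : S → ℝ) (hP0 : ∀ x, 0 ≤ P x) (hQ0 : ∀ x, 0 ≤ Q x)
    (hP1 : ∑ x, P x = 1) (hQ1 : ∑ x, Q x = 1)
    (Shat : Finset S) (xhat xhh : S) (hxhat : xhat ∈ Shat) (hxhh : xhh ∈ Shatᶜ)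
    (hR : 0 ≤ P xhat - ∑ y ∈ univ \ ({xhat, xhh} : Finset S), max (Q y - P y) 0)
    (hT : 0 ≤ Q xhh - ∑ x ∈ univ \ ({xhat, xhh} : Finset S), max (P x - Q x) 0) :
    ∃ μ : S × S → ℝ,
      (∀ z, 0 ≤ μ z) ∧ (∑ z, μ z = 1) ∧
      (∀ x, ∑ y, μ (x, y) = P x) ∧
      (∀ y, ∑ x, μ (x, y) = Q y) ∧
      (∀ z, μ z ≠ 0 →
        z.1 = z.2 ∨ z.1 = xhat ∨ ((z.1 ∈ Shat ∨ z.1 = xhh) ∧ z.2 = xhat) ∨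
          z.2 = xhh) ∧
      (∀ y, μ (xhh, y) ≠ 0 → y = xhat ∨ y = xhh) := by
  have hne : xhat ≠ xhh := by
    intro h; rw [h] at hxhat; exact (Finset.mem_compl.1 hxhh) hxhat
  have hne' : ¬ (xhh = xhat) := fun h => hne h.symm
  set D : Finset S := univ \ ({xhat, xhh} : Finset S) with hD
  set R : ℝ := P xhat - ∑ y ∈ D, max (Q y - P y) 0 with hRdef
  set T : ℝ := Q xhh - ∑ x ∈ D, max (P x - Q x) 0 with hTdef
  -- key identity
  have hdiff : ∀ y : S, max (Q y - P y) 0 - max (P y - Q y) 0 = Q y - P y := by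
    intro y
    rcases le_total (Q y) (P y) with h | h
    · rw [max_eq_right (by linarith), max_eq_left (by linarith)]; ring
    · rw [max_eq_left (by linarith), max_eq_right (by linarith)]; ring
  have hDsum : ∑ y ∈ D, (Q y - P y) =
      (1 - Q xhat - Q xhh) - (1 - P xhat - P xhh) := by
    have h0 : ∑ y, (Q y - P y) = 0 := by
      rw [Finset.sum_sub_distrib, hP1, hQ1]; ring
    have h1 := sum_split_pair xhat xhh hne (fun y => Q y - P y)
    rw [h0] at h1
    linarith
  have hkey : R + P xhh = Q xhat + T := by
    have h2 : ∑ y ∈ D, max (Q y - P y) 0 - ∑ y ∈ D, max (P y - Q y) 0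
        = ∑ y ∈ D, (Q y - P y) := by
      rw [← Finset.sum_sub_distrib]
      exact Finset.sum_congr rfl fun y _ => hdiff y
    rw [hRdef, hTdef]
    linarith [hDsum, h2]
  set c : ℝ := min R (Q xhat) with hcdef
  set e : ℝ := R - c with hedef
  set a : ℝ := Q xhat - c with hadef
  set b : ℝ := P xhh - a with hbdef
  have hc0 : 0 ≤ c := le_min hR (hQ0 xhat)
  have he0 : 0 ≤ e := by simp [hedef, hcdef]
  have ha0 : 0 ≤ a := by simp [hadef, hcdef]
  have hb0 : 0 ≤ b := by
    have h1 : Q xhat - P xhh ≤ R := by linarith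
    have h2 : Q xhat - P xhh ≤ Q xhat := by linarith [hP0 xhh]
    have := le_min h1 h2
    simp only [hbdef, hadef, hcdef]
    linarith
  have heb : e + b = T := by
    simp only [hedef, hbdef, hadef]
    linarith
  set μ : S × S → ℝ := fun z =>
    if z.1 = xhat then
      (if z.2 = xhat then c else if z.2 = xhh then e else max (Q z.2 - P z.2) 0)
    else if z.1 = xhh then
      (if z.2 = xhat then a else if z.2 = xhh then b else 0)
    else
      (if z.2 = z.1 then min (P z.1) (Q z.1)
       else if z.2 = xhh then max (P z.1 - Q z.1) 0 else 0) with hμ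
  have hrow : ∀ x, ∑ y, μ (x, y) = P x := by
    intro x
    by_cases hx1 : x = xhat
    · rw [hx1, sum_split_pair xhat xhh hne (fun y => μ (xhat, y))]
      have h1 : μ (xhat, xhat) = c := by simp [hμ]
      have h2 : μ (xhat, xhh) = e := by simp [hμ, hne']
      have h3 : ∑ y ∈ D, μ (xhat, y) = ∑ y ∈ D, max (Q y - P y) 0 := by
        refine Finset.sum_congr rfl fun y hy => ?_
        simp only [hD, Finset.mem_sdiff, Finset.mem_insert, Finset.mem_singleton] at hy
        push_neg at hy
        simp [hμ, hy.2.1, hy.2.2]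
      rw [h1, h2, h3]
      simp only [hedef]
      linarith [hRdef]
    · by_cases hx2 : x = xhh
      · rw [hx2, sum_split_pair xhat xhh hne (fun y => μ (xhh, y))]
        have h1 : μ (xhh, xhat) = a := by simp [hμ, hne']
        have h2 : μ (xhh, xhh) = b := by simp [hμ, hne']
        have h3 : ∑ y ∈ D, μ (xhh, y) = 0 := by
          refine Finset.sum_eq_zero fun y hy => ?_
          simp only [hD, Finset.mem_sdiff, Finset.mem_insert, Finset.mem_singleton] at hy
          push_neg at hy
          simp [hμ, hne', hy.2.1, hy.2.2]
        rw [h1, h2, h3]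
        simp only [hbdef, hadef]
        linarith
      · rw [sum_split_pair x xhh hx2 (fun y => μ (x, y))]
        have h1 : μ (x, x) = min (P x) (Q x) := by simp [hμ, hx1, hx2]
        have hx2' : ¬ (xhh = x) := fun h => hx2 h.symm
        have h2 : μ (x, xhh) = max (P x - Q x) 0 := by
          simp [hμ, hx1, hx2, hx2']
        have h3 : ∑ y ∈ univ \ ({x, xhh} : Finset S), μ (x, y) = 0 := by
          refine Finset.sum_eq_zero fun y hy => ?_
          simp only [Finset.mem_sdiff, Finset.mem_insert, Finset.mem_singleton] at hy
          push_neg at hy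
          simp [hμ, hx1, hx2, hy.2.1, hy.2.2]
        rw [h1, h2, h3]
        rcases le_total (P x) (Q x) with h | h
        · rw [min_eq_left h, max_eq_right (by linarith)]; ring
        · rw [min_eq_right h, max_eq_left (by linarith)]; ring
  have hcol : ∀ y, ∑ x, μ (x, y) = Q y := by
    intro y
    by_cases hy1 : y = xhat
    · rw [hy1, sum_split_pair xhat xhh hne (fun x => μ (x, xhat))]
      have h1 : μ (xhat, xhat) = c := by simp [hμ]
      have h2 : μ (xhh, xhat) = a := by simp [hμ, hne']
      have h3 : ∑ x ∈ D, μ (x, xhat) = 0 := by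
        refine Finset.sum_eq_zero fun x hx => ?_
        simp only [hD, Finset.mem_sdiff, Finset.mem_insert, Finset.mem_singleton] at hx
        push_neg at hx
        have h4 : ¬ (xhat = x) := fun h => hx.2.1 h.symm
        simp [hμ, hx.2.1, hx.2.2, h4, hne]
      rw [h1, h2, h3]
      simp only [hadef]
      linarith
    · by_cases hy2 : y = xhh
      · rw [hy2, sum_split_pair xhat xhh hne (fun x => μ (x, xhh))]
        have h1 : μ (xhat, xhh) = e := by simp [hμ, hne']
        have h2 : μ (xhh, xhh) = b := by simp [hμ, hne']
        have h3 : ∑ x ∈ D, μ (x, xhh) = ∑ x ∈ D, max (P x - Q x) 0 := by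
          refine Finset.sum_congr rfl fun x hx => ?_
          simp only [hD, Finset.mem_sdiff, Finset.mem_insert, Finset.mem_singleton] at hx
          push_neg at hx
          have h4 : ¬ (xhh = x) := fun h => hx.2.2 h.symm
          simp [hμ, hx.2.1, hx.2.2, h4]
        rw [h1, h2, h3]
        linarith [heb, hTdef]
      · have hne2 : xhat ≠ y := fun h => hy1 h.symm
        rw [sum_split_pair xhat y hne2 (fun x => μ (x, y))]
        have h1 : μ (xhat, y) = max (Q y - P y) 0 := by simp [hμ, hy1, hy2]
        have h2 : μ (y, y) = min (P y) (Q y) := by simp [hμ, hy1, hy2]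
        have h3 : ∑ x ∈ univ \ ({xhat, y} : Finset S), μ (x, y) = 0 := by
          refine Finset.sum_eq_zero fun x hx => ?_
          simp only [Finset.mem_sdiff, Finset.mem_insert, Finset.mem_singleton] at hx
          push_neg at hx
          by_cases hx3 : x = xhh
          · simp [hμ, hx.2.1, hx3, hy1, hy2, hne']
          · have h4 : ¬ (y = x) := fun h => hx.2.2 h.symm
            simp [hμ, hx.2.1, hx3, hy2, h4]
        rw [h1, h2, h3]
        rcases le_total (P y) (Q y) with h | h
        · rw [min_eq_left h, max_eq_left (by linarith)]; ring
        · rw [min_eq_right h, max_eq_right (by linarith)]; ring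
  refine ⟨μ, ?_, ?_, hrow, hcol, ?_, ?_⟩
  · intro z
    simp only [hμ]
    split_ifs <;>
      first
        | exact hc0 | exact he0 | exact ha0 | exact hb0
        | exact le_max_right _ _ | exact le_min (hP0 _) (hQ0 _) | exact le_refl 0
  · rw [Fintype.sum_prod_type]
    simp_rw [hrow]
    exact hP1
  · intro z hz
    simp only [hμ] at hz
    split_ifs at hz <;>
      first
        | exact absurd rfl hz
        | exact Or.inr (Or.inl ‹z.1 = xhat›)
        | exact Or.inr (Or.inr (Or.inr ‹z.2 = xhh›))
        | exact Or.inr (Or.inr (Or.inl ⟨Or.inr ‹z.1 = xhh›, ‹z.2 = xhat›⟩))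
        | exact Or.inl ‹z.2 = z.1›.symm
  · intro y hy
    by_cases hy1 : y = xhat
    · exact Or.inl hy1
    · by_cases hy2 : y = xhh
      · exact Or.inr hy2
      · exfalso
        apply hy
        simp [hμ, hne', hy1, hy2]

/-- Lemma 2.2: coupling adapted to a nontrivial partition `Shat ∪ Shatᶜ` with
distinguished elements `xhat ∈ Shat` and `xhh ∈ Shatᶜ`. -/
theorem stmt_1 {S : Type*} [Fintype S] [DecidableEq S] (N : ℕ)
    (P : (Fin N → ℝ) → S → ℝ)
    (hP0 : ∀ θ, (∀ i, θ i ∈ Set.Ioo (0:ℝ) 1) → ∀ x, 0 ≤ P θ x)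
    (hP1 : ∀ θ, (∀ i, θ i ∈ Set.Ioo (0:ℝ) 1) → ∑ x, P θ x = 1)
    (hcont : ∀ x : S, ContinuousOn (fun θ => P θ x) {θ | ∀ i, θ i ∈ Set.Ioo (0:ℝ) 1})
    (Shat : Finset S) (hShat : Shat.Nonempty) (hShatc : Shatᶜ.Nonempty)
    (θ₁ : Fin N → ℝ) (hθ₁ : ∀ i, θ₁ i ∈ Set.Ioo (0:ℝ) 1)
    (xhat xhh : S) (hxhat : xhat ∈ Shat) (hxhh : xhh ∈ Shatᶜ)
    (hpos1 : 0 < P θ₁ xhat) (hpos2 : 0 < P θ₁ xhh) :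
    ∃ U ∈ nhds θ₁, ∀ θ₂ ∈ U, (∀ i, θ₂ i ∈ Set.Ioo (0:ℝ) 1) →
      ∃ μ : S × S → ℝ,
        (∀ z, 0 ≤ μ z) ∧ (∑ z, μ z = 1) ∧
        (∀ x, ∑ y, μ (x, y) = P θ₁ x) ∧
        (∀ y, ∑ x, μ (x, y) = P θ₂ y) ∧
        (∀ z, μ z ≠ 0 →
          z.1 = z.2 ∨ z.1 = xhat ∨ ((z.1 ∈ Shat ∨ z.1 = xhh) ∧ z.2 = xhat) ∨
            z.2 = xhh) ∧
        (∀ y, μ (xhh, y) ≠ 0 → y = xhat ∨ y = xhh) := by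
  set m : ℝ := min (P θ₁ xhat) (P θ₁ xhh) with hm
  have hm0 : 0 < m := lt_min hpos1 hpos2
  set n : ℝ := (Fintype.card S : ℝ) with hn
  have hn0 : 0 ≤ n := Nat.cast_nonneg _
  set ε : ℝ := m / (2 * (n + 1)) with hε
  have hε0 : 0 < ε := by positivity
  have hεm : (n + 1) * ε = m / 2 := by
    rw [hε]; field_simp
  have hopen : IsOpen {θ : Fin N → ℝ | ∀ i, θ i ∈ Set.Ioo (0:ℝ) 1} := by
    have h : {θ : Fin N → ℝ | ∀ i, θ i ∈ Set.Ioo (0:ℝ) 1}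
        = ⋂ i, (fun θ : Fin N → ℝ => θ i) ⁻¹' Set.Ioo (0:ℝ) 1 := by
      ext θ; simp
    rw [h]
    exact isOpen_iInter_of_finite fun i => isOpen_Ioo.preimage (continuous_apply i)
  have hat : ∀ x : S, ContinuousAt (fun θ => P θ x) θ₁ :=
    fun x => (hcont x).continuousAt (hopen.mem_nhds hθ₁)
  have hev : ∀ᶠ θ₂ in nhds θ₁, ∀ x : S, |P θ₂ x - P θ₁ x| < ε := by
    rw [Filter.eventually_all]
    intro x
    have h := (hat x) (Metric.ball_mem_nhds (P θ₁ x) hε0)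
    filter_upwards [h] with θ hθ
    rw [Set.mem_preimage, Metric.mem_ball, Real.dist_eq] at hθ
    exact hθ
  refine ⟨_, hev, fun θ₂ hθ₂ hθ₂Ioo => ?_⟩
  have hθ₂' : ∀ x : S, |P θ₂ x - P θ₁ x| < ε := hθ₂
  have hbound : ∀ f : S → ℝ, (∀ y, max (f y) 0 ≤ ε) →
      ∑ y ∈ univ \ ({xhat, xhh} : Finset S), max (f y) 0 ≤ n * ε := by
    intro f hf
    calc ∑ y ∈ univ \ ({xhat, xhh} : Finset S), max (f y) 0
        ≤ ∑ _y ∈ univ \ ({xhat, xhh} : Finset S), ε :=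
          Finset.sum_le_sum fun y _ => hf y
      _ = (univ \ ({xhat, xhh} : Finset S)).card * ε := by
          rw [Finset.sum_const, nsmul_eq_mul]
      _ ≤ n * ε := by
          apply mul_le_mul_of_nonneg_right _ hε0.le
          rw [hn]
          exact_mod_cast Finset.card_le_univ _
  have hb1 : ∑ y ∈ univ \ ({xhat, xhh} : Finset S), max (P θ₂ y - P θ₁ y) 0 ≤ n * ε :=
    hbound _ fun y => max_le (le_of_lt (lt_of_le_of_lt (le_abs_self _) (hθ₂' y))) hε0.le
  have hb2 : ∑ y ∈ univ \ ({xhat, xhh} : Finset S), max (P θ₁ y - P θ₂ y) 0 ≤ n * ε :=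
    hbound _ fun y => max_le (le_of_lt (lt_of_le_of_lt (le_abs_self _)
      (by rw [abs_sub_comm]; exact hθ₂' y))) hε0.le
  have hmx : m ≤ P θ₁ xhat := min_le_left _ _
  have hmh : m ≤ P θ₁ xhh := min_le_right _ _
  have hxhh2 : P θ₁ xhh - ε ≤ P θ₂ xhh := by
    have := hθ₂' xhh
    have := abs_lt.1 this
    linarith [this.1]
  have hR : 0 ≤ P θ₁ xhat - ∑ y ∈ univ \ ({xhat, xhh} : Finset S), max (P θ₂ y - P θ₁ y) 0 := by
    nlinarith [hε0]
  have hT : 0 ≤ P θ₂ xhh - ∑ x ∈ univ \ ({xhat, xhh} : Finset S), max (P θ₁ x - P θ₂ x) 0 := by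
    nlinarith [hε0]
  exact core_coupling (P θ₁) (P θ₂) (hP0 θ₁ hθ₁) (hP0 θ₂ hθ₂Ioo)
    (hP1 θ₁ hθ₁) (hP1 θ₂ hθ₂Ioo) Shat xhat xhh hxhat hxhh hR hT
end
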